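/- arXiv:2106.01734 — 2 statements merged into one kernel-verified Lean document; each statement's English description precedes it below -/
import Mathlib

section
/- If the index type I is projective, then for every family of predicates φ i : A i → Prop indexed by I, the indexed infimum ⨅ᵢ φ is instance equivalent to the simpler predicate ⨅'ᵢ φ on the product Π i : I, A i defined by (⨅'ᵢ φ)(f) ↔ ∃ i, φ i (f i). -/
universe u

/-- Instance reducibility. -/
def InstRed {A : Type u} {B : Type u} (φ : A → Prop) (ψ : B → Prop) : Prop :=
  ∀ x : A, ∃ y : B, ψ y → φ x

/-- Instance equivalence. -/
def InstEquiv {A : Type u} {B : Type u} (φ : A → Prop) (ψ : B → Prop) : Prop :=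
  InstRed φ ψ ∧ InstRed ψ φ

/-- The indexed infimum, defined on the product of families of inhabited subsets. -/
def piInf {I : Type u} {A : I → Type u} (φ : ∀ i, A i → Prop) :
    (∀ i : I, {s : Set (A i) // s.Nonempty}) → Prop :=
  fun f => ∃ i, ∃ x ∈ (f i).val, φ i x

/-- The simpler indexed infimum, defined on the product type. -/
def piInf' {I : Type u} {A : I → Type u} (φ : ∀ i, A i → Prop) :
    (∀ i : I, A i) → Prop :=
  fun f => ∃ i, φ i (f i)

/-- A type is projective when every total relation on it has a choice function. -/
def Projective (I : Type u) : Prop :=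
  ∀ (X : Type u) (R : I → X → Prop), (∀ i, ∃ x, R i x) → ∃ f : I → X, ∀ i, R i (f i)

theorem Projective.exists_pi {I : Type u} (hI : Projective I) {A : I → Type u}
    {R : ∀ i, A i → Prop} (hR : ∀ i, ∃ x, R i x) : ∃ g : ∀ i, A i, ∀ i, R i (g i) := by
  -- choose into `Σ j, A j`, asking the point chosen for `i` to lie over `i`
  obtain ⟨g, hg⟩ := hI (Σ j, A j) (fun i x => ∃ h : x.1 = i, R i (h ▸ x.2))
    fun i => (hR i).elim fun x hx => ⟨⟨i, x⟩, rfl, hx⟩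
  exact ⟨fun i => (hg i).choose ▸ (g i).2, fun i => (hg i).choose_spec⟩

theorem instRed_piInf_piInf' {I : Type u} {A : I → Type u} (hI : Projective I)
    (φ : ∀ i, A i → Prop) : InstRed (piInf φ) (piInf' φ) := fun f =>
  let ⟨g, hg⟩ := hI.exists_pi fun i => (f i).2
  ⟨g, fun ⟨i, hi⟩ => ⟨i, g i, hg i, hi⟩⟩

theorem instRed_piInf'_piInf {I : Type u} {A : I → Type u} (φ : ∀ i, A i → Prop) :
    InstRed (piInf' φ) (piInf φ) := fun g =>
  ⟨fun i => ⟨{g i}, Set.singleton_nonempty _⟩,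
    fun ⟨i, _, hx, hi⟩ => ⟨i, Set.mem_singleton_iff.1 hx ▸ hi⟩⟩

theorem piInf_equiv_piInf'_of_projective {I : Type u} {A : I → Type u}
    (hI : Projective I) (φ : ∀ i, A i → Prop) :
    InstEquiv (piInf φ) (piInf' φ) :=
  ⟨instRed_piInf_piInf' hI φ, instRed_piInf'_piInf φ⟩
end

section
/- Let φ : A → Prop and ψ : B → Prop be predicates and I, J types. Then: (1) if I is nonempty then φ ≤ᵢ φ^I; (2) if I is a retract of J (there are r : J → I and s : I → J with r ∘ s = id) then φ^I ≤ᵢ φ^J; (3) if I is projective and φ ≤ᵢ ψ then φ^I ≤ᵢ ψ^I. -/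
universe u

/-- The `I`-parameterization of a predicate. -/
def param {A : Type u} (φ : A → Prop) (I : Type u) : (I → A) → Prop :=
  fun f => ∀ i : I, φ (f i)

section

variable {A B I J : Type u} (φ : A → Prop)

theorem instRed_param_of_nonempty [Nonempty I] : InstRed φ (param φ I) := fun x =>
  ⟨fun _ => x, fun h => h (Classical.arbitrary I)⟩

theorem instRed_param_of_surjective {r : J → I} (hr : Function.Surjective r) :
    InstRed (param φ I) (param φ J) := fun f =>
  ⟨f ∘ r, fun h i => by
    obtain ⟨j, rfl⟩ := hr i
    exact h j⟩

variable {φ} {ψ : B → Prop}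

/-- Projectivity of `I` chooses the pointwise witnesses of `φ ≤ᵢ ψ` uniformly in `i`. -/
theorem InstRed.param_of_projective (hI : Projective I) (h : InstRed φ ψ) :
    InstRed (param φ I) (param ψ I) := fun f => by
  obtain ⟨g, hg⟩ := hI B (fun i y => ψ y → φ (f i)) (fun i => h (f i))
  exact ⟨g, fun hψ i => hg i (hψ i)⟩

end

theorem param_properties {A B : Type u} (φ : A → Prop) (ψ : B → Prop) (I J : Type u) :
    (Nonempty I → InstRed φ (param φ I)) ∧
    ((∃ (r : J → I) (s : I → J), r ∘ s = id) → InstRed (param φ I) (param φ J)) ∧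
    (Projective I → InstRed φ ψ → InstRed (param φ I) (param ψ I)) :=
  ⟨fun _ => instRed_param_of_nonempty φ,
    fun ⟨_, _, hrs⟩ =>
      instRed_param_of_surjective φ (Function.LeftInverse.surjective (congrFun hrs)),
    fun hI h => h.param_of_projective hI⟩
end
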